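/- (Duality gap decrease.) Let x and s be block vectors of rank r with x, s ∈ int 𝓛, and let σ := 1 − 0.01/√r. If d(x, s, σ) ≤ 0.005·σ, then (1/r)·xᵀs ≤ 1 − 0.005/√r, where xᵀs is the Euclidean inner product of the concatenated vectors. -/

import Mathlib

set_option synthInstance.maxHeartbeats 1000000
set_option maxHeartbeats 1000000

noncomputable section
open scoped BigOperators

namespace SOCP

/-- `E k` is `ℝ^(k+1)`, written as `(x₀; x̄)` with `x̄ ∈ ℝ^k`. -/
abbrev E (k : ℕ) := EuclideanSpace ℝ (Fin (k + 1))

/-- Build an element of `E k` from a plain function. -/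
def mk {k : ℕ} (f : Fin (k + 1) → ℝ) : E k := (WithLp.equiv 2 _).symm f

/-- The Euclidean norm `‖x̄‖` of the tail of `x`. -/
def tnorm {k : ℕ} (x : E k) : ℝ := Real.sqrt (∑ i : Fin k, (x i.succ) ^ 2)

/-- First Jordan eigenvalue `λ₁(x) = x₀ + ‖x̄‖`. -/
def lam1 {k : ℕ} (x : E k) : ℝ := x 0 + tnorm x

/-- Second Jordan eigenvalue `λ₂(x) = x₀ − ‖x̄‖`. -/
def lam2 {k : ℕ} (x : E k) : ℝ := x 0 - tnorm x

/-- Jordan product `x ∘ y = (xᵀy; x₀ȳ + y₀x̄)`. -/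
def jmul {k : ℕ} (x y : E k) : E k :=
  mk (fun j => if j = 0 then ∑ i, x i * y i else x 0 * y j + y 0 * x j)

/-- The Jordan identity `e = (1; 0)`. -/
def idE {k : ℕ} : E k := mk (fun j => if j = 0 then 1 else 0)

/-- First Jordan frame vector `c₁(x) = ½(1; x̄/‖x̄‖)`. -/
def c1 {k : ℕ} (x : E k) : E k :=
  mk (fun j => if j = 0 then 1 / 2 else x j / (2 * tnorm x))

/-- Second Jordan frame vector `c₂(x) = ½(1; −x̄/‖x̄‖)`. -/
def c2 {k : ℕ} (x : E k) : E k :=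
  mk (fun j => if j = 0 then 1 / 2 else -x j / (2 * tnorm x))

/-- Arrowhead matrix `Arw(x) = [[x₀, x̄ᵀ], [x̄, x₀ I]]`. -/
def Arw {k : ℕ} (x : E k) : Matrix (Fin (k + 1)) (Fin (k + 1)) ℝ :=
  Matrix.of fun i j =>
    if i = 0 then x j else if j = 0 then x i else if i = j then x 0 else 0

/-- Quadratic representation `Q_x = 2 Arw(x)² − Arw(x ∘ x)`. -/
def Qmat {k : ℕ} (x : E k) : Matrix (Fin (k + 1)) (Fin (k + 1)) ℝ :=
  (2 : ℝ) • (Arw x * Arw x) - Arw (jmul x x)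

/-- Jordan square root `x^{1/2} = √λ₁ c₁ + √λ₂ c₂` (equal to `(√x₀; 0)` when `x̄ = 0`). -/
def jsqrt {k : ℕ} (x : E k) : E k :=
  if tnorm x = 0 then mk (fun j => if j = 0 then Real.sqrt (x 0) else 0)
  else Real.sqrt (lam1 x) • c1 x + Real.sqrt (lam2 x) • c2 x

/-- `T_x := Q_{x^{1/2}}`. -/
def Tmat {k : ℕ} (x : E k) : Matrix (Fin (k + 1)) (Fin (k + 1)) ℝ := Qmat (jsqrt x)

/-- Jordan inverse `x⁻¹ = λ₁⁻¹ c₁ + λ₂⁻¹ c₂` (equal to `(x₀⁻¹; 0)` when `x̄ = 0`). -/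
def jinv {k : ℕ} (x : E k) : E k :=
  if tnorm x = 0 then mk (fun j => if j = 0 then (x 0)⁻¹ else 0)
  else (lam1 x)⁻¹ • c1 x + (lam2 x)⁻¹ • c2 x

/-- Matrix-vector product, as a map on `E k`. -/
def mulVecE {k : ℕ} (M : Matrix (Fin (k + 1)) (Fin (k + 1)) ℝ) (v : E k) : E k :=
  mk (M.mulVec (WithLp.equiv 2 _ v))

/-- Block vectors `x = (x₁; …; x_r)` with `x_i ∈ ℝ^{d i + 2}` (so each block has dim ≥ 2). -/
abbrev BV {r : ℕ} (d : Fin r → ℕ) : Type := (i : Fin r) → E (d i + 1)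

variable {r : ℕ} {d : Fin r → ℕ}

/-- Spectral norm `‖x‖₂ = max_i (|x_{i,0}| + ‖x̄_i‖)`. -/
def specNorm (x : BV d) : ℝ := ⨆ i, (|x i 0| + tnorm (x i))

/-- Frobenius norm `‖x‖_F = √(Σ_i (λ₁(x_i)² + λ₂(x_i)²))`. -/
def frobNorm (x : BV d) : ℝ := Real.sqrt (∑ i, (lam1 (x i) ^ 2 + lam2 (x i) ^ 2))

/-- Minimum Jordan eigenvalue `λ_min(x) = min_i λ₂(x_i)`. -/
def lamMin (x : BV d) : ℝ := ⨅ i, lam2 (x i)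

/-- Blockwise Jordan product. -/
def jmulB (x y : BV d) : BV d := fun i => jmul (x i) (y i)

/-- Block identity element. -/
def idB : BV d := fun _ => idE

/-- Membership in the interior of the product of Lorentz cones: `‖x̄_i‖ < x_{i,0}` for all `i`. -/
def inIntLB (x : BV d) : Prop := ∀ i, tnorm (x i) < x i 0

/-- Euclidean inner product of the concatenated vectors. -/
def ip (x y : BV d) : ℝ := ∑ i, ∑ j, x i j * y i j

/-- Block-diagonal application of `T_x`: `(T_x s)_i = T_{x_i} s_i`. -/
def TB (x s : BV d) : BV d := fun i => mulVecE (Tmat (x i)) (s i)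

/-- Distance from the central path `d(x, s, ν) = ‖T_x s − ν e‖_F`. -/
def cdist (x s : BV d) (ν : ℝ) : ℝ := frobNorm (TB x s - ν • (idB : BV d))

/-- Blockwise Jordan inverse. -/
def jinvB (x : BV d) : BV d := fun i => jinv (x i)


/-!
The first row of `Q_u` is `(u ∘ u)ᵀ`, and `x^{1/2} ∘ x^{1/2} = x`, so the first coordinate of every
block of `T_x s` is `x_iᵀ s_i`. Summing over blocks, `xᵀs − rσ` is the sum of the first coordinates
of `T_x s − σ e`. A block's first coordinate is at most its Frobenius norm over `√2`, so by
Cauchy–Schwarz `xᵀs ≤ rσ + √(r/2) · d(x, s, σ) ≤ r − 0.01√r + 0.005√r`.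
-/

section Lorentz

open Matrix

variable {k : ℕ}

lemma mk_apply (f : Fin (k + 1) → ℝ) (j : Fin (k + 1)) : mk f j = f j := rfl

lemma mulVecE_apply (M : Matrix (Fin (k + 1)) (Fin (k + 1)) ℝ) (v : E k) (j : Fin (k + 1)) :
    mulVecE M v j = (M *ᵥ ⇑v) j := rfl

lemma tnorm_nonneg (x : E k) : 0 ≤ tnorm x := Real.sqrt_nonneg _

lemma tnorm_sq (x : E k) : tnorm x ^ 2 = ∑ i : Fin k, x i.succ ^ 2 :=
  Real.sq_sqrt (by positivity)

lemma sq_apply_succ_le_tnorm_sq (x : E k) (i : Fin k) : x i.succ ^ 2 ≤ tnorm x ^ 2 := by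
  rw [tnorm_sq]
  exact Finset.single_le_sum (fun j _ => sq_nonneg (x j.succ)) (Finset.mem_univ i)

lemma apply_succ_eq_zero_of_tnorm_eq_zero {x : E k} (hx : tnorm x = 0) (i : Fin k) :
    x i.succ = 0 := by
  have h := sq_apply_succ_le_tnorm_sq x i
  rw [hx] at h
  exact pow_eq_zero_iff two_ne_zero |>.1 (le_antisymm (by simpa using h) (sq_nonneg _))

lemma Arw_zero_apply (u : E k) (j : Fin (k + 1)) : Arw u 0 j = u j := by
  simp [Arw]

lemma Arw_transpose (u : E k) : (Arw u)ᵀ = Arw u := by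
  ext i j
  rcases eq_or_ne i 0 with rfl | hi <;> rcases eq_or_ne j 0 with rfl | hj <;>
    simp [Arw, *, eq_comm]

lemma Arw_mulVec (u v : E k) : Arw u *ᵥ ⇑v = ⇑(jmul u v) := by
  funext j
  induction j using Fin.cases with
  | zero => simp [Arw, jmul, mk_apply, Matrix.mulVec, dotProduct]
  | succ i =>
    simp only [mulVec, dotProduct, Arw, of_apply, Fin.succ_ne_zero, ↓reduceIte, ite_mul,
      zero_mul, Fin.sum_univ_succ, Fin.succ_inj, Finset.sum_ite_eq, Finset.mem_univ, jmul, mk_apply]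
    ring

lemma Qmat_zero_apply (u : E k) (j : Fin (k + 1)) : Qmat u 0 j = jmul u u j := by
  have hrow : (Arw u * Arw u) 0 j = jmul u u j := by
    rw [← Arw_mulVec, Matrix.mul_apply, Matrix.mulVec, dotProduct]
    nth_rewrite 2 [← Arw_transpose]
    simp only [Arw_zero_apply, transpose_apply, mul_comm]
  simp only [Qmat, Matrix.sub_apply, Matrix.smul_apply, hrow, Arw_zero_apply, smul_eq_mul]
  ring

lemma mulVecE_Qmat_apply_zero (u v : E k) : mulVecE (Qmat u) v 0 = ∑ j, jmul u u j * v j := by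
  simp only [mulVecE_apply, mulVec, dotProduct, Qmat_zero_apply]

lemma jsqrt_apply_zero (x : E k) : jsqrt x 0 = (√(lam1 x) + √(lam2 x)) / 2 := by
  by_cases h : tnorm x = 0
  · simp [jsqrt, h, mk_apply, lam1, lam2]
  · simp only [jsqrt, h, ↓reduceIte, c1, c2, PiLp.add_apply, PiLp.smul_apply, mk_apply,
      smul_eq_mul]
    ring

lemma jsqrt_apply_succ (x : E k) (i : Fin k) :
    jsqrt x i.succ = (√(lam1 x) - √(lam2 x)) / (2 * tnorm x) * x i.succ := by
  by_cases h : tnorm x = 0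
  · simp [jsqrt, h, mk_apply, Fin.succ_ne_zero]
  · simp only [jsqrt, h, ↓reduceIte, c1, c2, PiLp.add_apply, PiLp.smul_apply, mk_apply,
      Fin.succ_ne_zero, smul_eq_mul]
    ring

lemma jmul_jsqrt_self {x : E k} (hx : tnorm x ≤ x 0) : jmul (jsqrt x) (jsqrt x) = x := by
  set t := tnorm x
  set a := √(lam1 x)
  set b := √(lam2 x)
  set c := (a - b) / (2 * t)
  -- `x^{1/2} = ((a + b)/2; c x̄)`; when `t = 0`, `c = 0` by the convention `y / 0 = 0`, and `a = b`.
  have ha : a ^ 2 = x 0 + t := Real.sq_sqrt (by simp only [lam1]; linarith [tnorm_nonneg x])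
  have hb : b ^ 2 = x 0 - t := Real.sq_sqrt (by simp only [lam2]; linarith)
  have hab : (a + b) * (a - b) = 2 * t := by linear_combination ha - hb
  obtain ⟨hct, hcx⟩ : c ^ 2 * t ^ 2 = (a - b) ^ 2 / 4 ∧
      ∀ i : Fin k, (a + b) * c * x i.succ = x i.succ := by
    rcases eq_or_ne t 0 with ht | ht
    · have hba : a = b := by
        rw [ht, add_zero] at ha; rw [ht, sub_zero, ← ha] at hb
        exact ((pow_left_inj₀ (Real.sqrt_nonneg _) (Real.sqrt_nonneg _) two_ne_zero).1 hb).symm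
      simp [ht, hba, apply_succ_eq_zero_of_tnorm_eq_zero (ht : tnorm x = 0)]
    · refine ⟨by simp only [c]; field_simp; ring, fun i => ?_⟩
      simp only [c]
      field_simp
      linear_combination x i.succ * hab
  ext j
  induction j using Fin.cases with
  | zero =>
    have hsum : ∑ i : Fin k, c * x i.succ * (c * x i.succ) = c ^ 2 * t ^ 2 := by
      rw [tnorm_sq, Finset.mul_sum]
      exact Finset.sum_congr rfl fun i _ => by ring
    simp only [jmul, mk_apply, if_pos, Fin.sum_univ_succ, jsqrt_apply_zero, jsqrt_apply_succ]
    rw [hsum]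
    linear_combination hct + (ha + hb) / 2
  | succ i =>
    simp only [jmul, mk_apply, if_neg (Fin.succ_ne_zero i), jsqrt_apply_zero, jsqrt_apply_succ]
    linear_combination hcx i

lemma mulVecE_Tmat_apply_zero {x : E k} (hx : tnorm x ≤ x 0) (v : E k) :
    mulVecE (Tmat x) v 0 = ∑ j, x j * v j := by
  rw [Tmat, mulVecE_Qmat_apply_zero, jmul_jsqrt_self hx]

end Lorentz

lemma two_mul_sum_sq_apply_zero_le_frobNorm_sq (z : BV d) :
    2 * ∑ i, z i 0 ^ 2 ≤ frobNorm z ^ 2 := by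
  rw [frobNorm, Real.sq_sqrt (by positivity), Finset.mul_sum]
  exact Finset.sum_le_sum fun i _ => by
    simp only [lam1, lam2]
    nlinarith [sq_nonneg (tnorm (z i))]

lemma sum_apply_zero_le_frobNorm (z : BV d) : ∑ i, z i 0 ≤ √(r / 2) * frobNorm z := by
  have hcs : (∑ i, z i 0) ^ 2 ≤ r * ∑ i, z i 0 ^ 2 := by
    simpa using Finset.sum_mul_sq_le_sq_mul_sq Finset.univ (fun _ => (1 : ℝ)) (fun i => z i 0)
  have hsq : (∑ i, z i 0) ^ 2 ≤ (√(r / 2) * frobNorm z) ^ 2 := by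
    rw [mul_pow, Real.sq_sqrt (by positivity)]
    nlinarith [two_mul_sum_sq_apply_zero_le_frobNorm_sq z]
  exact le_of_sq_le_sq hsq (mul_nonneg (Real.sqrt_nonneg _) (Real.sqrt_nonneg _))

lemma ip_eq_sum_TB_apply_zero {x : BV d} (hx : inIntLB x) (s : BV d) :
    ip x s = ∑ i, TB x s i 0 :=
  Finset.sum_congr rfl fun i _ => (mulVecE_Tmat_apply_zero (hx i).le (s i)).symm

lemma ip_le_mul_add_cdist {x : BV d} (hx : inIntLB x) (s : BV d) (ν : ℝ) :
    ip x s ≤ r * ν + √(r / 2) * cdist x s ν := by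
  have hw : ∑ i, (TB x s - ν • (idB : BV d)) i 0 = ip x s - r * ν := by
    simp [ip_eq_sum_TB_apply_zero hx, idB, idE, mk_apply, Finset.sum_sub_distrib]
  have h := sum_apply_zero_le_frobNorm (TB x s - ν • (idB : BV d))
  rw [hw] at h
  unfold cdist
  linarith

theorem duality_gap_decrease_general {r : ℕ} {d : Fin r → ℕ} (hr : 0 < r)
    (x s : BV d) (hx : inIntLB x)
    (hd : cdist x s (1 - 0.01 / Real.sqrt r) ≤ 0.005 * (1 - 0.01 / Real.sqrt r)) :
    ip x s / r ≤ 1 - 0.005 / Real.sqrt r := by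
  have hr' : (0 : ℝ) < r := Nat.cast_pos.2 hr
  set q := √(r : ℝ)
  have hq : 0 < q := Real.sqrt_pos.2 hr'
  have hrq : (r : ℝ) = q ^ 2 := (Real.sq_sqrt hr'.le).symm
  have hcdist : √(r / 2) * cdist x s (1 - 0.01 / q) ≤ q * 0.005 := by
    have : 0 ≤ 0.01 / q := by positivity
    exact mul_le_mul (Real.sqrt_le_sqrt (by linarith)) (by linarith) (Real.sqrt_nonneg _) hq.le
  have hgap := ip_le_mul_add_cdist hx s (1 - 0.01 / q)
  rw [div_le_iff₀ hr']
  calc ip x s ≤ r * (1 - 0.01 / q) + q * 0.005 := by linarith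
    _ = (1 - 0.005 / q) * r := by
      rw [hrq]
      field_simp
      ring

/-- Duality gap decrease. With `σ = 1 − 0.01/√r`, if `d(x, s, σ) ≤ 0.005·σ`
then `(1/r)·xᵀs ≤ 1 − 0.005/√r`. -/
theorem duality_gap_decrease {r : ℕ} {d : Fin r → ℕ} (hr : 0 < r)
    (x s : BV d) (hx : inIntLB x) (hs : inIntLB s)
    (hd : cdist x s (1 - 0.01 / Real.sqrt r) ≤ 0.005 * (1 - 0.01 / Real.sqrt r)) :
    ip x s / r ≤ 1 - 0.005 / Real.sqrt r :=
  duality_gap_decrease_general hr x s hx hd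

end SOCP
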